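/- Define the cutoff exchange potential V_x : [0,∞) → ℝ by V_x(ρ) = α_n ρ^{1/n} for ρ ≤ R, V_x(ρ) = α_n p(ρ) for R < ρ < 2R, and V_x(ρ) = α_n p(2R) for ρ ≥ 2R, where p is the given quartic polynomial p(ρ) = ((n+1)R^{1/n−4}/(4n²))ρ⁴ − ((4n+5)R^{1/n−3}/(3n²))ρ³ + (2(n+2)R^{1/n−2}/n²)ρ² − (4R^{1/n−1}/n²)ρ + ((12n²−11n+17)R^{1/n}/(12n²)). Then V_x is twice continuously differentiable on (0,∞) and globally bounded. -/

import Mathlib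

open Set

/-- The quartic transition polynomial `p`. -/
noncomputable def transP (n : ℕ) (R : ℝ) (ρ : ℝ) : ℝ :=
  ((n + 1) * R ^ ((1 : ℝ) / n - 4) / (4 * n ^ 2)) * ρ ^ 4
    - ((4 * n + 5) * R ^ ((1 : ℝ) / n - 3) / (3 * n ^ 2)) * ρ ^ 3
    + (2 * (n + 2) * R ^ ((1 : ℝ) / n - 2) / n ^ 2) * ρ ^ 2
    - (4 * R ^ ((1 : ℝ) / n - 1) / n ^ 2) * ρ
    + ((12 * n ^ 2 - 11 * n + 17) * R ^ ((1 : ℝ) / n) / (12 * n ^ 2))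

/-- The cutoff exchange potential `V_x`. -/
noncomputable def Vx (n : ℕ) (R αn : ℝ) (ρ : ℝ) : ℝ :=
  αn * (if ρ ≤ R then ρ ^ ((1 : ℝ) / n)
        else if ρ < 2 * R then transP n R ρ
        else transP n R (2 * R))

/-!
Write `V_x = α_n F`, where `F` follows `ρ ^ (1/n)` up to `R`, then `p` up to `2R`, and is frozen
at `p (2R)` beyond. The coefficients of `p` are exactly those for which `p`, `p'`, `p''` agree with
the corresponding derivatives of `ρ ^ (1/n)` at `R` and `p'`, `p''` vanish at `2R`. Gluing at
`R` and `2R` therefore commutes with differentiation twice: `F'` is glued from `(ρ ^ (1/n))'` and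
`p'`, and `F''` from `(ρ ^ (1/n))''` and `p''`, which is continuous on `(0, ∞)`. For boundedness,
`F` is continuous on `[0, 2R]` (as `1/n > 0`) and constant on `[2R, ∞)`.
-/

section Gluing

variable {f g f' g' : ℝ → ℝ} {a x : ℝ}

theorem ite_le_eqOn_Ici (hfg : f a = g a) :
    EqOn (fun y => if y ≤ a then f y else g y) g (Ici a) := by
  intro y hy
  rcases (mem_Ici.mp hy).eq_or_lt with rfl | hay
  · simp [hfg]
  · simp [not_le.mpr hay]

theorem hasDerivAt_ite_le (hf : x ≤ a → HasDerivAt f (f' x) x)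
    (hg : a ≤ x → HasDerivAt g (g' x) x) (hfg : f a = g a) (hfg' : f' a = g' a) :
    HasDerivAt (fun y => if y ≤ a then f y else g y) (if x ≤ a then f' x else g' x) x := by
  rcases lt_trichotomy x a with hxa | rfl | hxa
  · rw [if_pos hxa.le]
    refine (hf hxa.le).congr_of_eventuallyEq ?_
    filter_upwards [eventually_lt_nhds hxa] with y hy
    rw [if_pos hy.le]
  · rw [if_pos le_rfl]
    have hleft : HasDerivWithinAt (fun y => if y ≤ x then f y else g y) (f' x) (Iic x) x :=
      (hf le_rfl).hasDerivWithinAt.congr (fun y hy => if_pos hy) (if_pos le_rfl)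
    have hright : HasDerivWithinAt (fun y => if y ≤ x then f y else g y) (f' x) (Ici x) x :=
      hfg' ▸ (hg le_rfl).hasDerivWithinAt.congr_of_mem (ite_le_eqOn_Ici hfg) self_mem_Ici
    simpa only [Iic_union_Ici, hasDerivWithinAt_univ] using hleft.union hright
  · rw [if_neg (not_le.mpr hxa)]
    refine (hg hxa.le).congr_of_eventuallyEq ?_
    filter_upwards [eventually_gt_nhds hxa] with y hy
    rw [if_neg (not_le.mpr hy)]

theorem continuousAt_ite_le (hf : x ≤ a → ContinuousAt f x) (hg : a ≤ x → ContinuousAt g x)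
    (hfg : f a = g a) : ContinuousAt (fun y => if y ≤ a then f y else g y) x := by
  rcases lt_trichotomy x a with hxa | rfl | hxa
  · refine (hf hxa.le).congr ?_
    filter_upwards [eventually_lt_nhds hxa] with y hy
    rw [if_pos hy.le]
  · have hleft : ContinuousWithinAt (fun y => if y ≤ x then f y else g y) (Iic x) x :=
      (hf le_rfl).continuousWithinAt.congr (fun y hy => if_pos hy) (if_pos le_rfl)
    have hright : ContinuousWithinAt (fun y => if y ≤ x then f y else g y) (Ici x) x :=
      (hg le_rfl).continuousWithinAt.congr_of_mem (ite_le_eqOn_Ici hfg) self_mem_Ici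
    simpa only [Iic_union_Ici, continuousWithinAt_univ] using hleft.union hright
  · refine (hg hxa.le).congr ?_
    filter_upwards [eventually_gt_nhds hxa] with y hy
    rw [if_neg (not_le.mpr hy)]

theorem hasDerivAt_comp_min_of_deriv_eq_zero {b : ℝ} (hg : ∀ y, HasDerivAt g (g' y) y)
    (hb : g' b = 0) (x : ℝ) : HasDerivAt (fun y => g (min y b)) (g' (min x b)) x := by
  have h := hasDerivAt_ite_le (a := b) (x := x) (g' := fun _ => 0) (fun _ => hg x)
    (fun _ => hasDerivAt_const x (g b)) rfl hb
  simp only [min_def, apply_ite g, apply_ite g']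
  split_ifs at h ⊢ <;> simp_all

end Gluing

theorem exists_abs_le_of_continuousOn_Icc_of_const_on_Ici {f : ℝ → ℝ} {a b : ℝ}
    (hf : ContinuousOn f (Icc a b)) (hb : ∀ x, b ≤ x → f x = f b) :
    ∃ M, ∀ x, a ≤ x → |f x| ≤ M := by
  obtain ⟨M, hM⟩ := isCompact_Icc.exists_bound_of_continuousOn hf
  refine ⟨max M |f b|, fun x hx => ?_⟩
  rcases le_total x b with hxb | hbx
  · exact (hM x ⟨hx, hxb⟩).trans (le_max_left _ _)
  · exact (hb x hbx).symm ▸ le_max_right _ _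

theorem contDiffOn_succ_of_hasDerivAt {f f' : ℝ → ℝ} {s : Set ℝ} {k : ℕ} (hs : IsOpen s)
    (hf : ∀ x ∈ s, HasDerivAt f (f' x) x) (hf' : ContDiffOn ℝ k f' s) :
    ContDiffOn ℝ (k + 1) f s := by
  rw [contDiffOn_succ_iff_deriv_of_isOpen hs]
  refine ⟨fun x hx => (hf x hx).differentiableAt.differentiableWithinAt, by simp, ?_⟩
  exact hf'.congr fun x hx => (hf x hx).deriv

noncomputable def glueCutoff (R : ℝ) (f g : ℝ → ℝ) (ρ : ℝ) : ℝ :=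
  if ρ ≤ R then f ρ else g (min ρ (2 * R))

section glueCutoff

variable {R : ℝ} {f g f' g' : ℝ → ℝ}

theorem glueCutoff_of_two_mul_le (hR : 0 < R) {ρ : ℝ} (hρ : 2 * R ≤ ρ) :
    glueCutoff R f g ρ = g (2 * R) := by
  rw [glueCutoff, if_neg (by linarith), min_eq_right hρ]

theorem hasDerivAt_glueCutoff (hR : 0 ≤ R) (hf : ∀ x ∈ Ioi 0, HasDerivAt f (f' x) x)
    (hg : ∀ y, HasDerivAt g (g' y) y) (hfg : f R = g R) (hfg' : f' R = g' R)
    (hg' : g' (2 * R) = 0) {x : ℝ} (hx : 0 < x) :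
    HasDerivAt (glueCutoff R f g) (glueCutoff R f' g' x) x := by
  have hmin : min R (2 * R) = R := min_eq_left (by linarith)
  exact hasDerivAt_ite_le (g := fun y => g (min y (2 * R))) (g' := fun y => g' (min y (2 * R)))
    (fun _ => hf x hx) (fun _ => hasDerivAt_comp_min_of_deriv_eq_zero hg hg' x)
    (by simp only [hmin, hfg]) (by simp only [hmin, hfg'])

theorem continuousOn_glueCutoff (hR : 0 ≤ R) (hf : ContinuousOn f (Ioi 0)) (hg : Continuous g)
    (hfg : f R = g R) : ContinuousOn (glueCutoff R f g) (Ioi 0) := by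
  have hmin : min R (2 * R) = R := min_eq_left (by linarith)
  exact fun x hx => (continuousAt_ite_le (g := fun y => g (min y (2 * R)))
    (fun _ => hf.continuousAt (Ioi_mem_nhds hx)) (fun _ => by fun_prop)
    (by simp only [hmin, hfg])).continuousWithinAt

end glueCutoff

theorem hasDerivAt_quartic (a b c d e x : ℝ) :
    HasDerivAt (fun ρ => a * ρ ^ 4 - b * ρ ^ 3 + c * ρ ^ 2 - d * ρ + e)
      (4 * a * x ^ 3 - 3 * b * x ^ 2 + 2 * c * x - d) x := by
  refine (((((hasDerivAt_pow 4 x).const_mul a).sub ((hasDerivAt_pow 3 x).const_mul b)).add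
    ((hasDerivAt_pow 2 x).const_mul c)).sub ((hasDerivAt_id' x).const_mul d)).add_const e
    |>.congr_deriv ?_
  norm_num
  ring

theorem hasDerivAt_cubic (a b c d x : ℝ) :
    HasDerivAt (fun ρ => a * ρ ^ 3 - b * ρ ^ 2 + c * ρ - d)
      (3 * a * x ^ 2 - 2 * b * x + c) x := by
  refine ((((hasDerivAt_pow 3 x).const_mul a).sub ((hasDerivAt_pow 2 x).const_mul b)).add
    ((hasDerivAt_id' x).const_mul c)).sub_const d |>.congr_deriv ?_
  norm_num
  ring

-- The coefficients of `transP` are kept unexpanded, so that `hasDerivAt_quartic` and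
-- `hasDerivAt_cubic` apply to `transP` and `transPDeriv` by unification.
noncomputable def transPDeriv (n : ℕ) (R : ℝ) (ρ : ℝ) : ℝ :=
  4 * ((n + 1) * R ^ ((1 : ℝ) / n - 4) / (4 * n ^ 2)) * ρ ^ 3
    - 3 * ((4 * n + 5) * R ^ ((1 : ℝ) / n - 3) / (3 * n ^ 2)) * ρ ^ 2
    + 2 * (2 * (n + 2) * R ^ ((1 : ℝ) / n - 2) / n ^ 2) * ρ
    - (4 * R ^ ((1 : ℝ) / n - 1) / n ^ 2)

noncomputable def transPDeriv2 (n : ℕ) (R : ℝ) (ρ : ℝ) : ℝ :=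
  3 * (4 * ((n + 1) * R ^ ((1 : ℝ) / n - 4) / (4 * n ^ 2))) * ρ ^ 2
    - 2 * (3 * ((4 * n + 5) * R ^ ((1 : ℝ) / n - 3) / (3 * n ^ 2))) * ρ
    + 2 * (2 * (n + 2) * R ^ ((1 : ℝ) / n - 2) / n ^ 2)

section transP

variable {n : ℕ} {R : ℝ}

theorem hasDerivAt_transP (x : ℝ) : HasDerivAt (transP n R) (transPDeriv n R x) x :=
  hasDerivAt_quartic _ _ _ _ _ x

theorem hasDerivAt_transPDeriv (x : ℝ) :
    HasDerivAt (transPDeriv n R) (transPDeriv2 n R x) x :=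
  hasDerivAt_cubic _ _ _ _ x

theorem continuous_transP : Continuous (transP n R) := by
  unfold transP
  fun_prop

theorem continuous_transPDeriv2 : Continuous (transPDeriv2 n R) := by
  unfold transPDeriv2
  fun_prop

variable (hn : (n : ℝ) ≠ 0) (hR : 0 < R)
include hn hR

theorem transP_self : transP n R R = R ^ ((1 : ℝ) / n) := by
  simp only [transP, Real.rpow_sub hR, Real.rpow_one, Real.rpow_ofNat]
  field_simp
  ring

theorem transPDeriv_self : transPDeriv n R R = 1 / n * R ^ ((1 : ℝ) / n - 1) := by
  simp only [transPDeriv, Real.rpow_sub hR, Real.rpow_one, Real.rpow_ofNat]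
  field_simp
  ring

theorem transPDeriv2_self :
    transPDeriv2 n R R = 1 / n * ((1 / n - 1) * R ^ ((1 : ℝ) / n - 2)) := by
  simp only [transPDeriv2, Real.rpow_sub hR, Real.rpow_ofNat]
  field_simp
  ring

theorem transPDeriv_two_mul_self : transPDeriv n R (2 * R) = 0 := by
  simp only [transPDeriv, Real.rpow_sub hR, Real.rpow_one, Real.rpow_ofNat]
  field_simp
  ring

theorem transPDeriv2_two_mul_self : transPDeriv2 n R (2 * R) = 0 := by
  simp only [transPDeriv2, Real.rpow_sub hR, Real.rpow_ofNat]
  field_simp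
  ring

end transP

noncomputable def cutoffProfile (n : ℕ) (R : ℝ) : ℝ → ℝ :=
  glueCutoff R (· ^ ((1 : ℝ) / n)) (transP n R)

theorem Vx_eq_mul_cutoffProfile (n : ℕ) (R αn : ℝ) :
    Vx n R αn = fun ρ => αn * cutoffProfile n R ρ := by
  funext ρ
  rcases le_or_gt ρ R with h₁ | h₁
  · simp [Vx, cutoffProfile, glueCutoff, h₁]
  rcases lt_or_ge ρ (2 * R) with h₂ | h₂
  · simp [Vx, cutoffProfile, glueCutoff, not_le.2 h₁, h₂, min_eq_left h₂.le]
  · simp [Vx, cutoffProfile, glueCutoff, not_le.2 h₁, not_lt.2 h₂, min_eq_right h₂]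

section cutoffProfile

variable {n : ℕ} {R : ℝ} (hn : (n : ℝ) ≠ 0) (hR : 0 < R)
include hn hR

theorem hasDerivAt_cutoffProfile {x : ℝ} (hx : 0 < x) :
    HasDerivAt (cutoffProfile n R)
      (glueCutoff R (fun ρ => 1 / n * ρ ^ ((1 : ℝ) / n - 1)) (transPDeriv n R) x) x :=
  hasDerivAt_glueCutoff hR.le (fun _ hy => Real.hasDerivAt_rpow_const (Or.inl hy.ne'))
    hasDerivAt_transP (transP_self hn hR).symm (transPDeriv_self hn hR).symm
    (transPDeriv_two_mul_self hn hR) hx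

theorem hasDerivAt_deriv_cutoffProfile {x : ℝ} (hx : 0 < x) :
    HasDerivAt (glueCutoff R (fun ρ => 1 / n * ρ ^ ((1 : ℝ) / n - 1)) (transPDeriv n R))
      (glueCutoff R (fun ρ => 1 / n * ((1 / n - 1) * ρ ^ ((1 : ℝ) / n - 2)))
        (transPDeriv2 n R) x) x := by
  refine hasDerivAt_glueCutoff hR.le (fun y hy => ?_) hasDerivAt_transPDeriv
    (transPDeriv_self hn hR).symm (transPDeriv2_self hn hR).symm
    (transPDeriv2_two_mul_self hn hR) hx
  simpa [sub_sub, one_add_one_eq_two] using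
    (Real.hasDerivAt_rpow_const (p := 1 / n - 1) (Or.inl hy.ne')).const_mul (1 / (n : ℝ))

theorem contDiffOn_cutoffProfile : ContDiffOn ℝ 2 (cutoffProfile n R) (Ioi 0) := by
  have hC2 : ContinuousOn
      (glueCutoff R (fun ρ => 1 / n * ((1 / n - 1) * ρ ^ ((1 : ℝ) / n - 2))) (transPDeriv2 n R))
      (Ioi 0) :=
    continuousOn_glueCutoff hR.le (fun y hy => (Real.continuousAt_rpow_const y _
      (Or.inl hy.ne')).continuousWithinAt.const_mul _ |>.const_mul _)
      continuous_transPDeriv2 (transPDeriv2_self hn hR).symm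
  exact contDiffOn_succ_of_hasDerivAt (k := 1) isOpen_Ioi (fun _ => hasDerivAt_cutoffProfile hn hR)
    (contDiffOn_succ_of_hasDerivAt (k := 0) isOpen_Ioi
      (fun _ => hasDerivAt_deriv_cutoffProfile hn hR) (contDiffOn_zero.2 hC2))

theorem continuous_cutoffProfile : Continuous (cutoffProfile n R) :=
  (Real.continuous_rpow_const (by positivity)).if_le
    (continuous_transP.comp (continuous_id.min continuous_const)) continuous_id continuous_const
    fun x hx => by rw [hx, min_eq_left (by linarith), transP_self hn hR]

end cutoffProfile

/-- The cutoff exchange potential `V_x` is twice continuously differentiable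
on `(0,∞)` and globally bounded on `[0,∞)`. -/
theorem stmt3 (n : ℕ) (hn : n = 2 ∨ n = 3) (R αn : ℝ) (hR : 0 < R) :
    ContDiffOn ℝ 2 (Vx n R αn) (Ioi (0 : ℝ)) ∧
      ∃ M : ℝ, ∀ ρ : ℝ, 0 ≤ ρ → |Vx n R αn ρ| ≤ M := by
  have hn0 : (n : ℝ) ≠ 0 := by rcases hn with rfl | rfl <;> norm_num
  rw [Vx_eq_mul_cutoffProfile]
  refine ⟨contDiffOn_const.mul (contDiffOn_cutoffProfile hn0 hR),
    exists_abs_le_of_continuousOn_Icc_of_const_on_Ici (b := 2 * R)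
      (continuous_const.mul (continuous_cutoffProfile hn0 hR)).continuousOn fun x hx => ?_⟩
  simp only [cutoffProfile, glueCutoff_of_two_mul_le hR hx, glueCutoff_of_two_mul_le hR le_rfl]
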